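/- Let C be an [n,k]_{q^m/q} rank-metric code with n ≤ m and with the property that the maximum rank of a codeword equals k. Then C has a basis consisting of vectors all of whose entries lie in F_q. -/

import Mathlib

open Module Submodule

/-- The rank support of a vector `v ∈ L^n` over the subfield `K`: the `K`-span of the
rows of the expansion matrix, i.e. the space of all `(φ (v 1), ..., φ (v n))` for
`K`-linear functionals `φ : L → K`. -/
noncomputable def rkSupport (K : Type) {L : Type} [Field K] [Field L] [Algebra K L]
    {n : ℕ} (v : Fin n → L) : Submodule K (Fin n → K) :=
  LinearMap.range (LinearMap.pi (fun i => LinearMap.applyₗ (v i) :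
    Fin n → Module.Dual K L →ₗ[K] K))

/-!
Pick pivot coordinates `p : κ → Fin n` on which restriction `c ↦ c ∘ p` is an isomorphism
`C ≃ L^κ` (so `|κ| = k`), and let `g` be the basis of `C` with `g t ∘ p = e_t`. If `μ ∈ L^κ` is
`K`-independent, the codeword `∑ μ_t g_t` already has rank `k` on the pivots, so maximality of `k`
forces each of its entries into `span_K μ`. For a fixed coordinate `j`, put `ψ μ = ∑ μ_t g_t j`.
Comparing `μ` with the transvected family `μ + μ_t e_i` shows that multiplication by
`a = g_i j = ψ e_i` preserves `span_K μ`. When `j` is not a pivot, `k < n ≤ [L : K]`, so if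
`a ∉ K` some such span contains `1` but not `a`, a contradiction.
-/

open Set

universe u

theorem Submodule.exists_linearEquiv_restrict_coords {L : Type*} [Field L] {ι : Type u}
    [Finite ι] (C : Submodule L (ι → L)) :
    ∃ (κ : Type u) (p : κ → ι) (e : C ≃ₗ[L] (κ → L)),
      Function.Injective p ∧ ∀ c t, e c t = (c : ι → L) (p t) := by
  classical
  have := Fintype.ofFinite ι
  let f : ι → Dual L C := fun j => C.subtype.dualMap ((Pi.basisFun L ι).dualBasis j)
  have hf : span L (range f) = ⊤ := by
    rw [range_comp' C.subtype.dualMap, span_image, Basis.span_eq, map_top, LinearMap.range_eq_top]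
    exact LinearMap.dualMap_surjective_of_injective C.injective_subtype
  -- a basis of `Dual L C` made of coordinate functionals; its dual basis is restriction to `p`
  obtain ⟨κ, p, hp, hspan, hind⟩ := exists_linearIndependent' L f
  have : Finite κ := Finite.of_injective p hp
  let b : Basis κ L (Dual L C) := Basis.mk hind (by rw [hspan, hf])
  exact ⟨κ, p, (evalEquiv L C).trans b.dualBasis.equivFun, hp, fun c t => by simp [b, f]⟩

section RankSupport

variable {K L : Type} [Field K] [Field L] [Algebra K L] {n : ℕ}

theorem finrank_rkSupport (v : Fin n → L) :
    finrank K (rkSupport K v) = finrank K (span K (range v)) := by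
  classical
  let T := Fintype.linearCombination K v
  have h : LinearMap.pi (fun i => LinearMap.applyₗ (v i) : Fin n → Dual K L →ₗ[K] K) =
      (Pi.basisFun K (Fin n)).dualBasis.equivFun.toLinearMap ∘ₗ T.dualMap := by
    ext φ i
    simp [T]
  rw [rkSupport, h, LinearMap.range_comp, LinearEquiv.finrank_map_eq,
    LinearMap.finrank_range_dualMap_eq_finrank_range, Fintype.range_linearCombination]

theorem apply_mem_span_of_finrank_rkSupport_le {κ : Type*} [Fintype κ] {v : Fin n → L}
    {p : κ → Fin n} (hp : LinearIndependent K (v ∘ p))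
    (hv : finrank K (rkSupport K v) ≤ Fintype.card κ) (j : Fin n) :
    v j ∈ span K (range (v ∘ p)) := by
  have : FiniteDimensional K (span K (range v)) :=
    FiniteDimensional.span_of_finite K (finite_range v)
  rw [finrank_rkSupport, ← finrank_span_eq_card hp] at hv
  rw [eq_of_le_of_finrank_le (span_mono (range_comp_subset_range p v)) hv]
  exact subset_span (mem_range_self j)

end RankSupport

section Column

variable {K : Type*} [Field K]

theorem exists_linearIndependent_mem_span_notMem_span {V : Type*} [AddCommGroup V] [Module K V]
    [FiniteDimensional K V] {κ : Type*} [Fintype κ] [Nonempty κ] {u w : V}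
    (hu : u ≠ 0) (hw : w ∉ K ∙ u) (hκ : Fintype.card κ < finrank K V) :
    ∃ μ : κ → V, LinearIndependent K μ ∧ u ∈ span K (range μ) ∧ w ∉ span K (range μ) := by
  have huw : LinearIndepOn K id {u, w} :=
    linearIndepOn_id_pair hu fun a h => hw (mem_span_singleton.mpr ⟨a, h⟩)
  have huw_ne : u ≠ w := fun h => hw (h ▸ mem_span_singleton_self u)
  set B := huw.extend (subset_univ _)
  have hB : LinearIndepOn K id B := huw.linearIndepOn_extend _
  have huwB : {u, w} ⊆ B := huw.subset_extend _
  have hBcard : B.ncard = finrank K V := by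
    rw [← Nat.card_coe_set_eq, ← finrank_eq_nat_card_basis (Basis.extend huw)]
  obtain ⟨T, huT, hTB, hTcard⟩ := exists_subsuperset_card_eq (s := {u}) (t := B \ {w})
    (n := Fintype.card κ) (by simpa [huw_ne] using huwB (mem_insert u {w}))
    (by rw [ncard_singleton]; exact Fintype.card_pos)
    (by rw [ncard_sdiff_singleton_of_mem (huwB (by simp)), hBcard]; omega)
  have hTB' : T ⊆ B := hTB.trans sdiff_subset
  have : Finite T := ((toFinite B).subset hTB').to_subtype
  obtain ⟨e⟩ : Nonempty (κ ≃ T) := by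
    rw [← Finite.card_eq, Nat.card_coe_set_eq, hTcard, Nat.card_eq_fintype_card]
  have hrange : range (((↑) : T → V) ∘ e) = T := by rw [EquivLike.range_comp, Subtype.range_coe]
  refine ⟨(↑) ∘ e, (hB.mono hTB').comp e e.injective, ?_, ?_⟩
  · rw [hrange]; exact subset_span (huT rfl)
  · rw [hrange, (hB.mono hTB').notMem_span_iff_id]
    exact ⟨hB.mono (insert_subset (huwB (by simp)) hTB'), fun h => (hTB h).2 rfl⟩

variable {κ : Type*} [DecidableEq κ]

theorem span_range_add_single {V : Type*} [AddCommGroup V] [Module K V] (μ : κ → V) {i t : κ}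
    (hti : t ≠ i) : span K (range (μ + Pi.single i (μ t))) = span K (range μ) := by
  set μ' : κ → V := μ + Pi.single i (μ t)
  have hs : ∀ s ≠ i, μ' s = μ s := fun s hs => by simp [μ', hs]
  have hi : μ' i = μ i + μ' t := by simp [μ', hs t hti]
  apply le_antisymm <;> refine span_le.mpr ?_ <;> rintro _ ⟨s, rfl⟩ <;>
    rcases eq_or_ne s i with rfl | hsi
  · rw [hi, hs t hti]
    exact add_mem (subset_span (mem_range_self _)) (subset_span (mem_range_self _))
  · rw [hs s hsi]; exact subset_span (mem_range_self _)
  · rw [eq_sub_of_add_eq hi.symm]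
    exact sub_mem (subset_span (mem_range_self _)) (subset_span (mem_range_self _))
  · rw [← hs s hsi]; exact subset_span (mem_range_self _)

theorem LinearIndependent.add_single [Fintype κ] {V : Type*} [AddCommGroup V] [Module K V]
    {μ : κ → V} (hμ : LinearIndependent K μ) {i t : κ} (hti : t ≠ i) :
    LinearIndependent K (μ + Pi.single i (μ t)) := by
  rw [linearIndependent_iff_card_eq_finrank_span, Set.finrank, span_range_add_single μ hti]
  exact (finrank_span_eq_card hμ).symm

variable {L : Type*} [Field L] [Algebra K L] {ψ : (κ → L) →ₗ[L] L}

theorem mul_apply_single_mem_span_of_ne [Fintype κ]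
    (hψ : ∀ μ : κ → L, LinearIndependent K μ → ψ μ ∈ span K (range μ))
    {μ : κ → L} (hμ : LinearIndependent K μ) {i t : κ} (hti : t ≠ i) :
    μ t * ψ (Pi.single i 1) ∈ span K (range μ) := by
  have h := hψ _ (hμ.add_single hti)
  rw [span_range_add_single μ hti, map_add, ← mul_one (μ t), ← smul_eq_mul, Pi.single_smul,
    map_smul] at h
  simpa using sub_mem h (hψ μ hμ)

theorem mul_apply_single_mem_span [Fintype κ]
    (hψ : ∀ μ : κ → L, LinearIndependent K μ → ψ μ ∈ span K (range μ))
    {μ : κ → L} (hμ : LinearIndependent K μ) (i t : κ) :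
    μ t * ψ (Pi.single i 1) ∈ span K (range μ) := by
  rcases ne_or_eq t i with hti | rfl
  · exact mul_apply_single_mem_span_of_ne hψ hμ hti
  rcases subsingleton_or_nontrivial κ with hκ | hκ
  · have hμt : μ = μ t • Pi.single t 1 := funext fun s => by rw [Subsingleton.elim s t]; simp
    have hψμ : ψ μ = μ t * ψ (Pi.single t 1) := by
      conv_lhs => rw [hμt]
      rw [map_smul, smul_eq_mul]
    exact hψμ ▸ hψ μ hμ
  · obtain ⟨j, hj⟩ := exists_ne t
    have := mul_apply_single_mem_span_of_ne hψ (hμ.comp (Equiv.swap t j) (Equiv.injective _)) hj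
    rwa [Function.comp_apply, Equiv.swap_apply_right, EquivLike.range_comp] at this

theorem apply_single_mem_range_algebraMap [Fintype κ]
    (hψ : ∀ μ : κ → L, LinearIndependent K μ → ψ μ ∈ span K (range μ))
    (hκ : Fintype.card κ < finrank K L) (i : κ) :
    ψ (Pi.single i 1) ∈ range (algebraMap K L) := by
  have : FiniteDimensional K L := Module.finite_of_finrank_pos (by omega)
  have : Nonempty κ := ⟨i⟩
  by_contra hx
  have hx' : ψ (Pi.single i 1) ∉ K ∙ (1 : L) := by
    simpa [mem_span_singleton, Algebra.algebraMap_eq_smul_one] using hx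
  obtain ⟨μ, hμ, h1, hψi⟩ := exists_linearIndependent_mem_span_notMem_span one_ne_zero hx' hκ
  have hmul : map (LinearMap.mulRight K (ψ (Pi.single i 1))) (span K (range μ)) ≤
      span K (range μ) :=
    (map_span_le _ _ _).mpr (by rintro _ ⟨t, rfl⟩; exact mul_apply_single_mem_span hψ hμ i t)
  exact hψi (by simpa using hmul (mem_map_of_mem h1))

end Column

section Code

variable {K L : Type} [Field K] [Field L] [Algebra K L] {n : ℕ}

theorem symm_apply_mem_span_of_finrank_rkSupport_le {C : Submodule L (Fin n → L)} {κ : Type*}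
    [Fintype κ] {p : κ → Fin n} {e : C ≃ₗ[L] (κ → L)}
    (he : ∀ c t, e c t = (c : Fin n → L) (p t))
    (hC : ∀ c ∈ C, finrank K (rkSupport K c) ≤ Fintype.card κ)
    {μ : κ → L} (hμ : LinearIndependent K μ) (j : Fin n) :
    (e.symm μ : Fin n → L) j ∈ span K (range μ) := by
  have hcp : (e.symm μ : Fin n → L) ∘ p = μ :=
    funext fun t => by rw [Function.comp_apply, ← he, e.apply_symm_apply]
  have h := apply_mem_span_of_finrank_rkSupport_le (hcp ▸ hμ) (hC _ (e.symm μ).2) j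
  rwa [hcp] at h

end Code

theorem stmt_7 {K L : Type} [Field K] [Field L] [Algebra K L] {n k : ℕ}
    (hnm : n ≤ Module.finrank K L)
    (C : Submodule L (Fin n → L)) (hk : Module.finrank L C = k)
    (hmax : IsGreatest {r : ℕ | ∃ c ∈ C, Module.finrank K (rkSupport K c) = r} k) :
    ∃ b : Fin k → (Fin n → L), LinearIndependent L b ∧
      Submodule.span L (Set.range b) = C ∧
      ∀ i j, ∃ x : K, b i j = algebraMap K L x := by
  classical
  obtain ⟨κ, p, e, hp, he⟩ := C.exists_linearEquiv_restrict_coords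
  have : Finite κ := .of_injective p hp
  have : Fintype κ := Fintype.ofFinite κ
  have hκ : Fintype.card κ = k := by
    rw [← hk, e.finrank_eq, Module.finrank_fintype_fun_eq_card]
  let σ := Fintype.equivFinOfCardEq hκ
  let g : Basis (Fin k) L C := ((Pi.basisFun L κ).map e.symm).reindex σ
  refine ⟨C.subtype ∘ g, g.linearIndependent.map' C.subtype C.ker_subtype, ?_, fun i j => ?_⟩
  · rw [range_comp, span_image, g.span_eq, Submodule.map_top, range_subtype]
  have hg : (C.subtype ∘ g) i = e.symm (Pi.single (σ.symm i) 1) := by simp [g]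
  rw [hg]
  by_cases hj : j ∈ range p
  · obtain ⟨s, rfl⟩ := hj
    rw [← he, e.apply_symm_apply]
    exact ⟨if s = σ.symm i then 1 else 0, by rw [Pi.single_apply]; split_ifs <;> simp⟩
  · have hκn : Fintype.card κ < finrank K L :=
      (Fintype.card_lt_of_injective_of_notMem p hp hj).trans_le (by simpa using hnm)
    obtain ⟨x, hx⟩ := apply_single_mem_range_algebraMap
      (ψ := LinearMap.proj j ∘ₗ C.subtype ∘ₗ e.symm.toLinearMap)
      (fun μ hμ => symm_apply_mem_span_of_finrank_rkSupport_le he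
        (fun c hc => hκ ▸ hmax.2 ⟨c, hc, rfl⟩) hμ j) hκn (σ.symm i)
    exact ⟨x, hx.symm⟩
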